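/- Let P be a crisp extended LP and I ∈ 𝕀. Then I is a Sakama–Inoue paraconsistent stable model of P (i.e., I = lfp(T_{P^I})) if and only if (I,I) is a stable fixpoint of A_P, i.e., A_P^st(I,I) = (I,I). -/
import Mathlib


open Classical

/-- Literals over a type `A` of atoms: atoms `p` and strongly negated atoms `¬p`. -/
inductive Lit (A : Type*) where
  | pos : A → Lit A
  | neg : A → Lit A

/-- Crisp paraconsistent interpretations: each atom gets a pair of Boolean truth values
(truth, falsity); `true` plays the role of 1 and `false` of 0.  The order is the
pointwise truth order `≤t`. -/
abbrev CInterp (A : Type*) := A → Bool × Bool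

/-- Evaluation of a literal under a crisp paraconsistent interpretation. -/
def clit {A : Type*} (I : CInterp A) : Lit A → Bool
  | .pos p => (I p).1
  | .neg p => (I p).2

/-- A crisp rule body: a finite set of positive body literals and a finite
set of weakly negated body literals. -/
structure CBody (A : Type*) where
  pos : Finset (Lit A)
  wneg : Finset (Lit A)

/-- A crisp extended logic program: a set of rules `ℓ ← B`. -/
abbrev CProg (A : Type*) := Set (Lit A × CBody A)

/-- Pair evaluation of a crisp body: `1` iff all positive body literals are true in `I`
and all weakly negated body literals are false in `J`. -/
noncomputable def cbody {A : Type*} (I J : CInterp A) (B : CBody A) : Bool :=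
  if (∀ ℓ ∈ B.pos, clit I ℓ = true) ∧ (∀ ℓ ∈ B.wneg, clit J ℓ = false) then true else false

/-- The (lower half of the) crisp approximator `A_P(·,·)₁`: the head of an atom `p`
gets the max (over rules) of the pair-evaluations of the corresponding bodies
(max over the empty set being 0, i.e. `false`). -/
noncomputable def cA1 {A : Type*} (P : CProg A) (L U : CInterp A) : CInterp A :=
  fun p => (if ∃ B, (Lit.pos p, B) ∈ P ∧ cbody L U B = true then true else false,
            if ∃ B, (Lit.neg p, B) ∈ P ∧ cbody L U B = true then true else false)

/-- The crisp approximator `A_P` on pairs. -/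
noncomputable def cA {A : Type*} (P : CProg A) (LU : CInterp A × CInterp A) :
    CInterp A × CInterp A :=
  (cA1 P LU.1 LU.2, cA1 P LU.2 LU.1)

/-- The order isomorphism `ζ` from crisp paraconsistent interpretations to sets of literals. -/
def zeta {A : Type*} (I : CInterp A) : Set (Lit A) :=
  (Lit.pos '' {p | (I p).1 = true}) ∪ (Lit.neg '' {p | (I p).2 = true})

/-- Least pre-fixpoint (Knaster–Tarski least fixpoint for monotone maps). -/
def lfpOf {α : Type*} [CompleteLattice α] (f : α → α) : α := sInf {x | f x ≤ x}

/-- Greatest post-fixpoint (Knaster–Tarski greatest fixpoint for monotone maps). -/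
def gfpOf {α : Type*} [CompleteLattice α] (f : α → α) : α := sSup {x | x ≤ f x}

/-- The stable approximator `A_P^st`. -/
noncomputable def cAst {A : Type*} (P : CProg A) (LU : CInterp A × CInterp A) :
    CInterp A × CInterp A :=
  (lfpOf (fun X => cA1 P X LU.2), lfpOf (fun X => cA1 P X LU.1))

/-- The stable-approximator iteration `(L^i, U^i)` starting from `(⊥,⊤)`. -/
noncomputable def iterLU {A : Type*} (P : CProg A) : ℕ → CInterp A × CInterp A
  | 0 => (⊥, ⊤)
  | i + 1 => cAst P (iterLU P i)

/-- Sakama's proven-facts operator `PF^{σ,δ}`. -/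
def PF {A : Type*} (P : CProg A) (σ δ : Set (Lit A)) (α : Set (Lit A)) : Set (Lit A) :=
  {ℓ | ∃ B, (ℓ, B) ∈ P ∧ ↑B.pos ⊆ σ ∪ α ∧ ↑B.wneg ⊆ δ}

/-- Sakama's default-facts operator `DF^{σ,δ}`. -/
def DF {A : Type*} (P : CProg A) (σ δ : Set (Lit A)) (β : Set (Lit A)) : Set (Lit A) :=
  {ℓ | ∀ B, (ℓ, B) ∈ P → (↑B.pos ∩ (β ∪ δ)).Nonempty ∨ (↑B.wneg ∩ σ).Nonempty}


/-- The Gelfond–Lifschitz style reduct `P^I`: keep the rule `ℓ ← (B⁺, ∅)` for each rule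
`ℓ ← B` of `P` all of whose weakly negated body literals are false in `I`. -/
def reduct {A : Type*} (P : CProg A) (I : CInterp A) : CProg A :=
  {r | ∃ B : CBody A, (r.1, B) ∈ P ∧ (∀ ℓ ∈ B.wneg, clit I ℓ = false) ∧
        r.2 = ⟨B.pos, ∅⟩}

/-- The immediate consequence operator of a (∼-free) crisp program. -/
noncomputable def cT {A : Type*} (P : CProg A) (J : CInterp A) : CInterp A :=
  cA1 P J J

/-- `I` is a Sakama–Inoue paraconsistent stable model of `P`
(i.e. `I = lfp(T_{P^I})`) iff `(I,I)` is a stable fixpoint of `A_P`,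
i.e. `A_P^st(I,I) = (I,I)`. -/
theorem stableModel_iff_stableFixpoint {A : Type*}
    (P : CProg A) (hfin : P.Finite) (I : CInterp A) :
    I = lfpOf (cT (reduct P I)) ↔ cAst P (I, I) = (I, I) := by
  have hmem : ∀ (ℓ : Lit A) (J : CInterp A),
      (∃ B, (ℓ, B) ∈ reduct P I ∧ cbody J J B = true) ↔
      (∃ B, (ℓ, B) ∈ P ∧ cbody J I B = true) := by
    intro ℓ J
    constructor
    · rintro ⟨B, ⟨B', hB', hw, hB⟩, hb⟩
      refine ⟨B', hB', ?_⟩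
      simp only at hB
      subst hB
      simp only [cbody] at hb ⊢
      split at hb
      · next hc => exact if_pos ⟨hc.1, hw⟩
      · exact absurd hb Bool.false_ne_true
    · rintro ⟨B, hB, hb⟩
      simp only [cbody] at hb
      by_cases h : (∀ ℓ' ∈ B.pos, clit J ℓ' = true) ∧ (∀ ℓ' ∈ B.wneg, clit I ℓ' = false)
      · refine ⟨⟨B.pos, ∅⟩, ⟨B, hB, h.2, rfl⟩, ?_⟩
        simp only [cbody, Finset.notMem_empty]
        exact if_pos ⟨h.1, by simp⟩
      · rw [if_neg h] at hb; exact absurd hb Bool.false_ne_true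
  have hfun : cT (reduct P I) = fun X => cA1 P X I := by
    funext J p
    simp only [cT, cA1, hmem]
  have : cAst P (I, I) = (lfpOf (cT (reduct P I)), lfpOf (cT (reduct P I))) := by
    simp [cAst, hfun]
  rw [this]
  constructor
  · intro h; rw [← h]
  · intro h
    have := congrArg Prod.fst h
    simpa using this.symm
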